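/- arXiv:1309.7649 — 2 statements merged into one kernel-verified Lean document; each statement's English description precedes it below -/
import Mathlib

section
/- Let p ∈ (0,1] and let U be a p-Banach space with the following property: for every ε > 0, every finite-dimensional p-Banach space Y, every subspace X of U and every isometry g : X → Y, there is an ε-isometry f : Y → U such that N(f (g x) − x) ≤ ε * N x for all x ∈ X. Then U is of almost universal disposition for finite-dimensional p-Banach spaces, i.e. the ε-isometry f can in fact be chosen with f (g x) = x for all x ∈ X. -/
/- Common framework: p-normed and p-Banach spaces, following the paper's definitions. -/

namespace PGurarii

/-- A `p`-norm on a real vector space: `N x = 0 ↔ x = 0`, absolute homogeneity, and the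
`p`-triangle inequality `N (x + y) ^ p ≤ N x ^ p + N y ^ p` (values in `ℝ₊`). -/
structure PNorm (p : ℝ) (X : Type) [AddCommGroup X] [Module ℝ X] where
  N : X → ℝ
  nonneg : ∀ x : X, 0 ≤ N x
  eq_zero_iff : ∀ x : X, N x = 0 ↔ x = 0
  smul_eq : ∀ (a : ℝ) (x : X), N (a • x) = |a| * N x
  add_pow_le : ∀ x y : X, N (x + y) ^ p ≤ N x ^ p + N y ^ p

/-- Completeness (sequential) for the induced metric `d(x,y) = N (x - y) ^ p`. -/
def IsCompleteP (p : ℝ) {X : Type} [AddCommGroup X] [Module ℝ X] (NX : PNorm p X) : Prop :=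
  ∀ u : ℕ → X,
    (∀ ε : ℝ, 0 < ε → ∃ n₀ : ℕ, ∀ m ≥ n₀, ∀ n ≥ n₀, NX.N (u m - u n) ^ p < ε) →
    ∃ x : X, ∀ ε : ℝ, 0 < ε → ∃ n₀ : ℕ, ∀ n ≥ n₀, NX.N (u n - x) ^ p < ε

/-- Separability for the induced metric topology. -/
def IsSeparableP (p : ℝ) {X : Type} [AddCommGroup X] [Module ℝ X] (NX : PNorm p X) : Prop :=
  ∃ D : Set X, D.Countable ∧ ∀ x : X, ∀ ε : ℝ, 0 < ε → ∃ y ∈ D, NX.N (x - y) ^ p < ε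

/-- A subspace is closed for the induced metric topology. -/
def IsClosedSubP (p : ℝ) {X : Type} [AddCommGroup X] [Module ℝ X] (NX : PNorm p X)
    (S : Submodule ℝ X) : Prop :=
  ∀ x : X, (∀ ε : ℝ, 0 < ε → ∃ y ∈ S, NX.N (x - y) ^ p < ε) → x ∈ S

/-- The restriction of a `p`-norm to a subspace. -/
def PNorm.restrict {p : ℝ} {X : Type} [AddCommGroup X] [Module ℝ X]
    (NX : PNorm p X) (S : Submodule ℝ X) : PNorm p S where
  N x := NX.N x
  nonneg x := NX.nonneg x
  eq_zero_iff x := by rw [NX.eq_zero_iff]; exact ZeroMemClass.coe_eq_zero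
  smul_eq a x := NX.smul_eq a x
  add_pow_le x y := NX.add_pow_le x y

/-- A `p`-Banach space: a real vector space with a `p`-norm, complete for the induced metric. -/
structure PBanach (p : ℝ) where
  carrier : Type
  [addCommGroup : AddCommGroup carrier]
  [module : Module ℝ carrier]
  pnorm : PNorm p carrier
  complete : IsCompleteP p pnorm

attribute [instance] PBanach.addCommGroup PBanach.module

/-- `U` is of almost universal disposition for finite-dimensional `p`-Banach spaces: for every
`ε > 0`, every isometry from a subspace `X` of `U` (with the restricted `p`-norm) into a
finite-dimensional `p`-Banach space `Y` extends, after an `ε`-isometry `Y → U`, the inclusion. -/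
def AUD (p : ℝ) (U : Type) [AddCommGroup U] [Module ℝ U] (NU : PNorm p U) : Prop :=
  ∀ ε : ℝ, 0 < ε → ∀ Y : PBanach p, FiniteDimensional ℝ Y.carrier →
    ∀ (Xs : Submodule ℝ U) (g : Xs →ₗ[ℝ] Y.carrier),
      (∀ x : Xs, Y.pnorm.N (g x) = NU.N (x : U)) →
      ∃ f : Y.carrier →ₗ[ℝ] U,
        (∀ y, (1 - ε) * Y.pnorm.N y ≤ NU.N (f y) ∧ NU.N (f y) ≤ (1 + ε) * Y.pnorm.N y) ∧
        ∀ x : Xs, f (g x) = (x : U)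

/-- `U` is of universal disposition for separable `p`-Banach spaces. -/
def UD (p : ℝ) (U : Type) [AddCommGroup U] [Module ℝ U] (NU : PNorm p U) : Prop :=
  ∀ Y : PBanach p, IsSeparableP p Y.pnorm →
    ∀ (Xs : Submodule ℝ U), IsClosedSubP p NU Xs →
      ∀ g : Xs →ₗ[ℝ] Y.carrier, (∀ x : Xs, Y.pnorm.N (g x) = NU.N (x : U)) →
        ∃ f : Y.carrier →ₗ[ℝ] U, (∀ y, NU.N (f y) = Y.pnorm.N y) ∧ ∀ x : Xs, f (g x) = (x : U)

end PGurarii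

/-
An isometry `g : X → Y` is injective, so it has a linear left inverse `h : Y → X`. Since `N ^ p`
makes the finite-dimensional space `Y` a Hausdorff topological vector space, `h` is continuous,
hence `N (h y) ≤ C * N y`. If `f₀` is a `δ`-isometry with `N (f₀ (g x) - x) ≤ δ * N x`, then
`f = f₀ + (ι - f₀ ∘ g) ∘ h` satisfies `f ∘ g = ι` exactly, and the correction term has
`p`-norm at most `C * δ * N y`. By the `p`-triangle inequality, `f` is an `ε`-isometry as soon
as `(1 + δ) ^ p + (C * δ) ^ p ≤ (1 + ε) ^ p` and `(1 - ε) ^ p + (C * δ) ^ p ≤ (1 - δ) ^ p`,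
which holds for all small `δ > 0`.
-/

namespace PGurarii

open Filter Topology

section PNorm

variable {p : ℝ} {X : Type} [AddCommGroup X] [Module ℝ X] (NX : PNorm p X)

theorem PNorm.map_zero : NX.N 0 = 0 := (NX.eq_zero_iff 0).mpr rfl

theorem PNorm.map_neg (x : X) : NX.N (-x) = NX.N x := by
  rw [← neg_one_smul ℝ x, NX.smul_eq, abs_neg, abs_one, one_mul]

theorem PNorm.pos_of_ne_zero {x : X} (hx : x ≠ 0) : 0 < NX.N x :=
  (NX.nonneg x).lt_of_ne' (mt (NX.eq_zero_iff x).mp hx)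

/-- `N ^ p` is a group norm inducing the metric of `X`; being only `|a| ^ p`-homogeneous, it makes
`X` a topological vector space but not a normed space. -/
noncomputable def PNorm.toAddGroupNorm (hp : 0 < p) : AddGroupNorm X where
  toFun x := NX.N x ^ p
  map_zero' := by simp only [NX.map_zero, Real.zero_rpow hp.ne']
  add_le' := NX.add_pow_le
  neg' x := by simp only [NX.map_neg]
  eq_zero_of_map_eq_zero' x h := by
    by_contra hx
    exact (Real.rpow_pos_of_pos (NX.pos_of_ne_zero hx) p).ne' h

noncomputable abbrev PNorm.toNormedAddCommGroup (hp : 0 < p) : NormedAddCommGroup X :=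
  (NX.toAddGroupNorm hp).toNormedAddCommGroup

theorem PNorm.continuousSMul (hp : 0 < p) :
    letI := NX.toNormedAddCommGroup hp
    ContinuousSMul ℝ X := by
  let _ := NX.toNormedAddCommGroup hp
  have norm_smul (a : ℝ) (x : X) : ‖a • x‖ = |a| ^ p * ‖x‖ := by
    change NX.N (a • x) ^ p = |a| ^ p * NX.N x ^ p
    rw [NX.smul_eq, Real.mul_rpow (abs_nonneg a) (NX.nonneg x)]
  have habs : Continuous fun a : ℝ => |a| ^ p :=
    continuous_abs.rpow_const fun _ => Or.inr hp.le
  refine ContinuousSMul.of_nhds_zero ?_ (fun x => ?_) (fun a => ?_) <;>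
    rw [tendsto_zero_iff_norm_tendsto_zero] <;> simp_rw [norm_smul]
  · rw [← nhds_prod_eq]
    exact ((habs.comp continuous_fst).mul continuous_snd.norm).tendsto' _ _
      (by simp [Real.zero_rpow hp.ne'])
  · exact (habs.mul continuous_const).tendsto' _ _ (by simp [Real.zero_rpow hp.ne'])
  · exact (continuous_const.mul continuous_norm).tendsto' _ _ (by simp)

variable {q : ℝ} {Y : Type} [AddCommGroup Y] [Module ℝ Y] (NY : PNorm q Y)

theorem PNorm.bound_of_ball_bound (T : X →ₗ[ℝ] Y) {r c : ℝ} (hr : 0 < r)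
    (h : ∀ x, NX.N x ≤ r → NY.N (T x) ≤ c) (x : X) : NY.N (T x) ≤ c / r * NX.N x := by
  rcases eq_or_ne x 0 with rfl | hx
  · simp only [_root_.map_zero, NX.map_zero, NY.map_zero, mul_zero, le_refl]
  have hNx := NX.pos_of_ne_zero hx
  have hscaled := h ((r / NX.N x) • x) (by
    rw [NX.smul_eq, abs_of_pos (by positivity), div_mul_cancel₀ _ hNx.ne'])
  rw [map_smul, NY.smul_eq, abs_of_pos (by positivity)] at hscaled
  rw [div_mul_eq_mul_div, le_div_iff₀ hr]
  calc NY.N (T x) * r = r / NX.N x * NY.N (T x) * NX.N x := by field_simp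
    _ ≤ c * NX.N x := by gcongr

theorem PNorm.exists_bound_of_finiteDimensional [FiniteDimensional ℝ X] (hp : 0 < p)
    (hq : 0 < q) (T : X →ₗ[ℝ] Y) : ∃ C, 0 < C ∧ ∀ x, NY.N (T x) ≤ C * NX.N x := by
  let _ := NX.toNormedAddCommGroup hp
  let _ := NY.toNormedAddCommGroup hq
  have _ := NX.continuousSMul hp
  have _ := NY.continuousSMul hq
  obtain ⟨η, hη, hT⟩ := Metric.continuousAt_iff.mp
    (T.continuous_of_finiteDimensional.continuousAt (x := 0)) 1 one_pos
  refine ⟨1 / (η / 2) ^ p⁻¹, by positivity, NX.bound_of_ball_bound NY T (by positivity) ?_⟩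
  intro x hx
  have hx_small : ‖x‖ < η := calc
    NX.N x ^ p ≤ ((η / 2) ^ p⁻¹) ^ p := by gcongr; exact NX.nonneg x
    _ = η / 2 := Real.rpow_inv_rpow (by positivity) hp.ne'
    _ < η := half_lt_self hη
  have hTx : ‖T x‖ < 1 := by simpa using hT (by simpa using hx_small)
  change NY.N (T x) ^ q < 1 at hTx
  exact le_of_not_gt fun h1 => (Real.one_lt_rpow h1 hq).not_gt hTx

theorem PNorm.ker_eq_bot_of_isometry {g : X →ₗ[ℝ] Y} (hg : ∀ x, NY.N (g x) = NX.N x) :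
    LinearMap.ker g = ⊥ :=
  LinearMap.ker_eq_bot'.mpr fun x hx => (NX.eq_zero_iff x).mp (by rw [← hg, hx, NY.map_zero])

theorem PNorm.rpow_sub_rpow_le (x y : X) : NX.N x ^ p - NX.N y ^ p ≤ NX.N (x + y) ^ p := by
  have h := NX.add_pow_le (x + y) (-y)
  rw [add_neg_cancel_right, NX.map_neg] at h
  linarith

end PNorm

section EpsIsometry

variable {p q : ℝ} {Y U : Type} [AddCommGroup Y] [Module ℝ Y] [AddCommGroup U] [Module ℝ U]
  (NY : PNorm q Y) (NU : PNorm p U)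

def IsEpsIsometry (ε : ℝ) (f : Y →ₗ[ℝ] U) : Prop :=
  ∀ y, (1 - ε) * NY.N y ≤ NU.N (f y) ∧ NU.N (f y) ≤ (1 + ε) * NY.N y

variable {NY NU}

theorem IsEpsIsometry.mono {ε ε' : ℝ} {f : Y →ₗ[ℝ] U} (hf : IsEpsIsometry NY NU ε f)
    (hεε' : ε ≤ ε') : IsEpsIsometry NY NU ε' f := fun y => by
  have := NY.nonneg y
  exact ⟨le_trans (by nlinarith) (hf y).1, (hf y).2.trans (by nlinarith)⟩

theorem IsEpsIsometry.add {δ ε η : ℝ} {f c : Y →ₗ[ℝ] U} (hp : 0 < p)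
    (hf : IsEpsIsometry NY NU δ f) (hc : ∀ y, NU.N (c y) ≤ η * NY.N y)
    (hδ : δ ∈ Set.Icc (0 : ℝ) 1) (hε : ε ∈ Set.Icc (0 : ℝ) 1) (hη : 0 ≤ η)
    (hupper : (1 + δ) ^ p + η ^ p ≤ (1 + ε) ^ p)
    (hlower : (1 - ε) ^ p + η ^ p ≤ (1 - δ) ^ p) : IsEpsIsometry NY NU ε (f + c) := by
  intro y
  obtain ⟨hδ0, hδ1⟩ := hδ
  obtain ⟨hε0, hε1⟩ := hε
  have hy := NY.nonneg y
  have hpow {a : ℝ} (ha : 0 ≤ a) : (a * NY.N y) ^ p = a ^ p * NY.N y ^ p :=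
    Real.mul_rpow ha hy
  have hfy := hf y
  have hcy : NU.N (c y) ^ p ≤ η ^ p * NY.N y ^ p := by
    rw [← hpow hη]; exact Real.rpow_le_rpow (NU.nonneg _) (hc y) hp.le
  have hfy_low : ((1 - δ) * NY.N y) ^ p ≤ NU.N (f y) ^ p :=
    Real.rpow_le_rpow (by nlinarith) hfy.1 hp.le
  have hfy_up : NU.N (f y) ^ p ≤ ((1 + δ) * NY.N y) ^ p :=
    Real.rpow_le_rpow (NU.nonneg _) hfy.2 hp.le
  have hyp : 0 ≤ NY.N y ^ p := Real.rpow_nonneg hy p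
  rw [LinearMap.add_apply]
  constructor
  · rw [← Real.rpow_le_rpow_iff (by nlinarith) (NU.nonneg _) hp]
    calc ((1 - ε) * NY.N y) ^ p ≤ ((1 - δ) ^ p - η ^ p) * NY.N y ^ p := by
          rw [hpow (by linarith)]; gcongr; linarith
      _ ≤ NU.N (f y) ^ p - NU.N (c y) ^ p := by rw [sub_mul, ← hpow (by linarith)]; linarith
      _ ≤ NU.N (f y + c y) ^ p := NU.rpow_sub_rpow_le _ _
  · rw [← Real.rpow_le_rpow_iff (NU.nonneg _) (by nlinarith) hp]
    calc NU.N (f y + c y) ^ p ≤ NU.N (f y) ^ p + NU.N (c y) ^ p := NU.add_pow_le _ _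
      _ ≤ ((1 + δ) ^ p + η ^ p) * NY.N y ^ p := by
          rw [add_mul, ← hpow (by linarith)]; linarith
      _ ≤ ((1 + ε) * NY.N y) ^ p := by rw [hpow (by linarith)]; gcongr

end EpsIsometry

theorem exists_small_rpow_perturbation {p : ℝ} (hp : 0 < p) (C : ℝ) {ε : ℝ} (hε0 : 0 < ε)
    (hε1 : ε ≤ 1) : ∃ δ, δ ∈ Set.Ioo (0 : ℝ) 1 ∧ (1 + δ) ^ p + (C * δ) ^ p ≤ (1 + ε) ^ p ∧
      (1 - ε) ^ p + (C * δ) ^ p ≤ (1 - δ) ^ p := by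
  have hupper : Tendsto (fun δ : ℝ => (1 + δ) ^ p + (C * δ) ^ p) (𝓝 0) (𝓝 1) :=
    Continuous.tendsto' (by fun_prop (disch := exact hp.le)) _ _ (by simp [hp.ne'])
  have hlower : Tendsto (fun δ : ℝ => (1 - δ) ^ p - (C * δ) ^ p) (𝓝 0) (𝓝 1) :=
    Continuous.tendsto' (by fun_prop (disch := exact hp.le)) _ _ (by simp [hp.ne'])
  have h1 : 1 < (1 + ε) ^ p := Real.one_lt_rpow (by linarith) hp
  have h2 : (1 - ε) ^ p < 1 := Real.rpow_lt_one (by linarith) (by linarith) hp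
  obtain ⟨δ, ⟨hup, hlow⟩, hδ⟩ := ((((hupper.eventually (gt_mem_nhds h1)).and
      (hlower.eventually (lt_mem_nhds h2))).filter_mono nhdsWithin_le_nhds).and
    (Ioo_mem_nhdsGT one_pos)).exists
  exact ⟨δ, hδ, hup.le, by linarith⟩

theorem statement4_general (p : ℝ) (hp0 : 0 < p)
    (U : PBanach p)
    (hU : ∀ ε : ℝ, 0 < ε → ∀ Y : PBanach p, FiniteDimensional ℝ Y.carrier →
      ∀ (Xs : Submodule ℝ U.carrier) (g : Xs →ₗ[ℝ] Y.carrier),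
        (∀ x : Xs, Y.pnorm.N (g x) = U.pnorm.N (x : U.carrier)) →
        ∃ f : Y.carrier →ₗ[ℝ] U.carrier,
          (∀ y, (1 - ε) * Y.pnorm.N y ≤ U.pnorm.N (f y) ∧
            U.pnorm.N (f y) ≤ (1 + ε) * Y.pnorm.N y) ∧
          ∀ x : Xs, U.pnorm.N (f (g x) - (x : U.carrier)) ≤ ε * U.pnorm.N (x : U.carrier)) :
    AUD p U.carrier U.pnorm := by
  intro ε hε Y _ Xs g hg
  obtain ⟨h, hhg⟩ := g.exists_leftInverse_of_injective
    ((U.pnorm.restrict Xs).ker_eq_bot_of_isometry Y.pnorm hg)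
  obtain ⟨C, hC, hh⟩ :=
    Y.pnorm.exists_bound_of_finiteDimensional (U.pnorm.restrict Xs) hp0 hp0 h
  obtain ⟨δ, ⟨hδ0, hδ1⟩, hupper, hlower⟩ :=
    exists_small_rpow_perturbation hp0 C (lt_min hε one_pos) (min_le_right ε 1)
  obtain ⟨f₀, hf₀, hf₀g⟩ := hU δ hδ0 Y ‹_› Xs g hg
  set c := (Xs.subtype - f₀ ∘ₗ g) ∘ₗ h
  have hc (y : Y.carrier) : U.pnorm.N (c y) ≤ C * δ * Y.pnorm.N y := calc
    U.pnorm.N (c y) = U.pnorm.N (f₀ (g (h y)) - h y) := by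
      rw [← U.pnorm.map_neg]; simp [c]
    _ ≤ δ * (C * Y.pnorm.N y) := (hf₀g (h y)).trans (by gcongr; exact hh y)
    _ = C * δ * Y.pnorm.N y := by ring
  refine ⟨f₀ + c, (IsEpsIsometry.add hp0 hf₀ hc ⟨hδ0.le, hδ1.le⟩
    ⟨(lt_min hε one_pos).le, min_le_right ε 1⟩ (by positivity) hupper hlower).mono
    (min_le_left ε 1), fun x => ?_⟩
  have hhgx : h (g x) = x := DFunLike.congr_fun hhg x
  simp [c, hhgx]

/-- if every isometry of a subspace of `U` into a finite-dimensional `p`-Banach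
space admits an `ε`-isometric `ε`-approximate extension back into `U`, then `U` is of almost
universal disposition for finite-dimensional `p`-Banach spaces. -/
theorem statement4 (p : ℝ) (hp0 : 0 < p) (hp1 : p ≤ 1)
    (U : PBanach p)
    (hU : ∀ ε : ℝ, 0 < ε → ∀ Y : PBanach p, FiniteDimensional ℝ Y.carrier →
      ∀ (Xs : Submodule ℝ U.carrier) (g : Xs →ₗ[ℝ] Y.carrier),
        (∀ x : Xs, Y.pnorm.N (g x) = U.pnorm.N (x : U.carrier)) →
        ∃ f : Y.carrier →ₗ[ℝ] U.carrier,
          (∀ y, (1 - ε) * Y.pnorm.N y ≤ U.pnorm.N (f y) ∧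
            U.pnorm.N (f y) ≤ (1 + ε) * Y.pnorm.N y) ∧
          ∀ x : Xs, U.pnorm.N (f (g x) - (x : U.carrier)) ≤ ε * U.pnorm.N (x : U.carrier)) :
    AUD p U.carrier U.pnorm :=
  statement4_general p hp0 U hU

end PGurarii
end

section
/- Let p ∈ (0,1], let H be the 2-dimensional real Hilbert space (Euclidean space ℝ² with the Euclidean norm ‖·‖₂), let X be a p-Banach space and let j₀ : H → X be a linear map with N(j₀ h) = ‖h‖₂ for all h ∈ H. Suppose X has the property (✓): for every 3-dimensional real vector space F equipped with a p-norm N_F and every linear map i : H → F with N_F(i h) = ‖h‖₂ for all h ∈ H, there exists a linear map j : F → X with N(j w) = N_F(w) for all w ∈ F and j (i h) = j₀ h for all h ∈ H. Then every dense subset of X has cardinality at least the continuum 2^{ℵ₀}. -/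
/-! For `A ⊆ ℕ` let `S_A h = sup_{n ∈ A} |⟪h, uₙ⟫|`, where `uₙ` is the unit vector at angle `2⁻ⁿ`;
then `N_A (h, t) ^ p = max (‖h‖ ^ p + |t| ^ p) (S_A h ^ p + 2 |t| ^ p)` is a `p`-norm on `ℓ²₂ × ℝ`
extending the Euclidean norm of `ℓ²₂`. Property (✓) realises each `N_A` inside `X` by a point `x_A`
with `N (x_A - j₀ h) = N_A (-h, 1)`. Since `uₙ` is isolated among the `uₘ`, a long enough multiple
`h = rₙ uₙ` has `S_A h ^ p ≤ rₙ ^ p - 1` when `n ∉ A`, while `S_A h = rₙ` when `n ∈ A`; so the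
`p`-distance from `x_A` to `j₀ h` is `rₙ ^ p + 2` or at most `rₙ ^ p + 1` according as `n ∈ A`.
Hence the continuum many points `x_A` are pairwise at `p`-distance at least `1`, and a dense set
has a different point close to each of them. -/

namespace PGurarii

open RealInnerProductSpace

lemma rpow_le_rpow_add_rpow {p a b c : ℝ} (hp0 : 0 ≤ p) (hp1 : p ≤ 1) (hc : 0 ≤ c) (ha : 0 ≤ a)
    (hb : 0 ≤ b) (h : c ≤ a + b) : c ^ p ≤ a ^ p + b ^ p :=
  (Real.rpow_le_rpow hc h hp0).trans (Real.rpow_add_le_add_rpow ha hb hp0 hp1)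

namespace PNorm

variable {p : ℝ} {X : Type} [AddCommGroup X] [Module ℝ X]

lemma N_neg (NX : PNorm p X) (x : X) : NX.N (-x) = NX.N x := by
  simpa using NX.smul_eq (-1) x

lemma N_sub_comm (NX : PNorm p X) (x y : X) : NX.N (x - y) = NX.N (y - x) := by
  rw [← neg_sub, N_neg]

lemma rpow_N_sub_le (NX : PNorm p X) (x y z : X) :
    NX.N (x - z) ^ p ≤ NX.N (x - y) ^ p + NX.N (y - z) ^ p := by
  simpa using NX.add_pow_le (x - y) (y - z)

noncomputable def ofRpow (hp : 0 < p) (M : X → ℝ) (nonneg : ∀ x, 0 ≤ M x)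
    (eq_zero_iff : ∀ x, M x = 0 ↔ x = 0) (smul_eq : ∀ (a : ℝ) x, M (a • x) = |a| ^ p * M x) (add_le : ∀ x y, M (x + y) ≤ M x + M y) :
    PNorm p X where
  N x := M x ^ p⁻¹
  nonneg x := Real.rpow_nonneg (nonneg x) _
  eq_zero_iff x := by rw [Real.rpow_eq_zero (nonneg x) (inv_ne_zero hp.ne'), eq_zero_iff]
  smul_eq a x := by
    rw [smul_eq, Real.mul_rpow (by positivity) (nonneg x), ← Real.rpow_mul (abs_nonneg a),
      mul_inv_cancel₀ hp.ne', Real.rpow_one]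
  add_pow_le x y := by
    simp only [Real.rpow_inv_rpow (nonneg _) hp.ne']
    exact add_le x y

lemma ofRpow_N_rpow (hp : 0 < p) (M : X → ℝ) (nonneg eq_zero_iff smul_eq add_le) (x : X) :
    (ofRpow hp M nonneg eq_zero_iff smul_eq add_le).N x ^ p = M x :=
  Real.rpow_inv_rpow (nonneg x) hp.ne'

end PNorm

section SupAbsInner

variable {ι E : Type} [NormedAddCommGroup E] [InnerProductSpace ℝ E] {u : ι → E}

lemma bddAbove_range_abs_inner (hu : ∀ i, ‖u i‖ ≤ 1) (s : Set ι) (h : E) :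
    BddAbove (Set.range fun i : s => |⟪h, u i⟫|) := by
  refine ⟨‖h‖, ?_⟩
  rintro _ ⟨i, rfl⟩
  calc |⟪h, u i⟫| ≤ ‖h‖ * ‖u i‖ := abs_real_inner_le_norm _ _
    _ ≤ ‖h‖ := mul_le_of_le_one_right (norm_nonneg h) (hu i)

noncomputable def supAbsInner (u : ι → E) (hu : ∀ i, ‖u i‖ ≤ 1) (s : Set ι) : Seminorm ℝ E :=
  Seminorm.of (fun h => ⨆ i : s, |⟪h, u i⟫|)
    (fun h h' => Real.iSup_le
      (fun i => calc
        |⟪h + h', u i⟫| ≤ |⟪h, u i⟫| + |⟪h', u i⟫| := by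
          rw [inner_add_left]
          exact abs_add_le _ _
        _ ≤ _ := add_le_add (le_ciSup (bddAbove_range_abs_inner hu s h) i)
          (le_ciSup (bddAbove_range_abs_inner hu s h') i))
      (add_nonneg (Real.iSup_nonneg fun _ => abs_nonneg _)
        (Real.iSup_nonneg fun _ => abs_nonneg _)))
    (fun a h => by
      simp only [real_inner_smul_left, abs_mul, Real.norm_eq_abs]
      exact (Real.mul_iSup_of_nonneg (abs_nonneg a) _).symm)

variable (hu : ∀ i, ‖u i‖ ≤ 1) {s : Set ι}

lemma abs_inner_le_supAbsInner (h : E) {i : ι} (hi : i ∈ s) :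
    |⟪h, u i⟫| ≤ supAbsInner u hu s h :=
  le_ciSup (bddAbove_range_abs_inner hu s h) ⟨i, hi⟩

lemma supAbsInner_le {h : E} {c : ℝ} (hc : 0 ≤ c) (hle : ∀ i ∈ s, |⟪h, u i⟫| ≤ c) :
    supAbsInner u hu s h ≤ c :=
  Real.iSup_le (fun i => hle i i.2) hc

lemma supAbsInner_le_norm (h : E) : supAbsInner u hu s h ≤ ‖h‖ :=
  supAbsInner_le hu (norm_nonneg h) fun i _ =>
    (abs_real_inner_le_norm _ _).trans (mul_le_of_le_one_right (norm_nonneg h) (hu i))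

lemma supAbsInner_smul_of_mem {n : ι} {r : ℝ} (hun : ‖u n‖ = 1) (hr : 0 ≤ r) (hn : n ∈ s) :
    supAbsInner u hu s (r • u n) = r := by
  refine le_antisymm ((supAbsInner_le_norm hu _).trans_eq ?_) ?_
  · rw [norm_smul, Real.norm_of_nonneg hr, hun, mul_one]
  · simpa [real_inner_smul_left, real_inner_self_eq_norm_sq, hun, abs_of_nonneg hr] using
      abs_inner_le_supAbsInner hu (r • u n) hn

lemma supAbsInner_smul_le_of_notMem {n : ι} {r c : ℝ} (hc : 0 ≤ c) (hcu : ∀ m ≠ n, |⟪u m, u n⟫| ≤ c)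
    (hr : 0 ≤ r) (hn : n ∉ s) : supAbsInner u hu s (r • u n) ≤ r * c := by
  refine supAbsInner_le hu (mul_nonneg hr hc) fun m hm => ?_
  rw [real_inner_smul_left, real_inner_comm, abs_mul, abs_of_nonneg hr]
  exact mul_le_mul_of_nonneg_left (hcu m (ne_of_mem_of_not_mem hm hn)) hr

end SupAbsInner

section ProdPNorm

variable {E : Type} [NormedAddCommGroup E] [NormedSpace ℝ E] {p : ℝ}

noncomputable def prodRpow (p : ℝ) (S : Seminorm ℝ E) (w : E × ℝ) : ℝ :=
  max (‖w.1‖ ^ p + |w.2| ^ p) (S w.1 ^ p + 2 * |w.2| ^ p)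

lemma prodRpow_nonneg (S : Seminorm ℝ E) (w : E × ℝ) : 0 ≤ prodRpow p S w :=
  le_max_of_le_left (by positivity)

lemma prodRpow_eq_zero_iff (hp : 0 < p) (S : Seminorm ℝ E) (w : E × ℝ) :
    prodRpow p S w = 0 ↔ w = 0 := by
  constructor
  · intro hw
    have h1 : ‖w.1‖ ^ p + |w.2| ^ p ≤ 0 := hw ▸ le_max_left _ _
    have n1 := Real.rpow_nonneg (norm_nonneg w.1) p
    have n2 := Real.rpow_nonneg (abs_nonneg w.2) p
    have e1 : ‖w.1‖ ^ p = 0 := by linarith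
    have e2 : |w.2| ^ p = 0 := by linarith
    rw [Real.rpow_eq_zero (norm_nonneg _) hp.ne', norm_eq_zero] at e1
    rw [Real.rpow_eq_zero (abs_nonneg _) hp.ne', abs_eq_zero] at e2
    exact Prod.ext e1 e2
  · rintro rfl
    simp [prodRpow, Real.zero_rpow hp.ne']

lemma prodRpow_smul (S : Seminorm ℝ E) (a : ℝ) (w : E × ℝ) :
    prodRpow p S (a • w) = |a| ^ p * prodRpow p S w := by
  simp only [prodRpow, Prod.smul_fst, Prod.smul_snd, norm_smul, map_smul_eq_mul, smul_eq_mul,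
    abs_mul, Real.norm_eq_abs, Real.mul_rpow (abs_nonneg a) (norm_nonneg _),
    Real.mul_rpow (abs_nonneg a) (abs_nonneg _), Real.mul_rpow (abs_nonneg a) (apply_nonneg S _)]
  rw [mul_max_of_nonneg _ _ (Real.rpow_nonneg (abs_nonneg a) p)]
  congr 1 <;> ring

lemma prodRpow_add_le (hp0 : 0 < p) (hp1 : p ≤ 1) (S : Seminorm ℝ E) (w w' : E × ℝ) :
    prodRpow p S (w + w') ≤ prodRpow p S w + prodRpow p S w' := by
  have hN := rpow_le_rpow_add_rpow hp0.le hp1 (norm_nonneg _) (norm_nonneg _) (norm_nonneg _)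
    (norm_add_le w.1 w'.1)
  have hS := rpow_le_rpow_add_rpow hp0.le hp1 (apply_nonneg S _) (apply_nonneg S _)
    (apply_nonneg S _) (map_add_le_add S w.1 w'.1)
  have hT := rpow_le_rpow_add_rpow hp0.le hp1 (abs_nonneg _) (abs_nonneg _) (abs_nonneg _)
    (abs_add_le w.2 w'.2)
  have l := le_max_left (‖w.1‖ ^ p + |w.2| ^ p) (S w.1 ^ p + 2 * |w.2| ^ p)
  have l' := le_max_left (‖w'.1‖ ^ p + |w'.2| ^ p) (S w'.1 ^ p + 2 * |w'.2| ^ p)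
  have r := le_max_right (‖w.1‖ ^ p + |w.2| ^ p) (S w.1 ^ p + 2 * |w.2| ^ p)
  have r' := le_max_right (‖w'.1‖ ^ p + |w'.2| ^ p) (S w'.1 ^ p + 2 * |w'.2| ^ p)
  simp only [prodRpow, Prod.fst_add, Prod.snd_add]
  exact max_le (by linarith) (by linarith)

noncomputable def prodPNorm (hp0 : 0 < p) (hp1 : p ≤ 1) (S : Seminorm ℝ E) : PNorm p (E × ℝ) :=
  PNorm.ofRpow hp0 (prodRpow p S) (prodRpow_nonneg S) (prodRpow_eq_zero_iff hp0 S)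
    (prodRpow_smul S) (prodRpow_add_le hp0 hp1 S)

variable (hp0 : 0 < p) (hp1 : p ≤ 1) (S : Seminorm ℝ E)

lemma rpow_prodPNorm (w : E × ℝ) : (prodPNorm hp0 hp1 S).N w ^ p = prodRpow p S w :=
  PNorm.ofRpow_N_rpow hp0 _ _ _ _ _ w

lemma prodPNorm_inl (hS : ∀ h, S h ≤ ‖h‖) (h : E) : (prodPNorm hp0 hp1 S).N (h, 0) = ‖h‖ := by
  rw [← Real.rpow_left_inj (PNorm.nonneg _ _) (norm_nonneg h) hp0.ne', rpow_prodPNorm]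
  simp only [prodRpow, abs_zero, Real.zero_rpow hp0.ne', add_zero, mul_zero]
  exact max_eq_left (Real.rpow_le_rpow (apply_nonneg S h) (hS h) hp0.le)

lemma rpow_prodPNorm_neg_one (h : E) :
    (prodPNorm hp0 hp1 S).N (-h, 1) ^ p = max (‖h‖ ^ p + 1) (S h ^ p + 2) := by
  simp [rpow_prodPNorm, prodRpow]

end ProdPNorm

section Directions

open Real

noncomputable def unitVecOfAngle (θ : ℝ) : EuclideanSpace ℝ (Fin 2) := !₂[cos θ, sin θ]

lemma norm_unitVecOfAngle (θ : ℝ) : ‖unitVecOfAngle θ‖ = 1 := by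
  simp [unitVecOfAngle, EuclideanSpace.norm_eq, Fin.sum_univ_two]

lemma inner_unitVecOfAngle (θ φ : ℝ) :
    ⟪unitVecOfAngle θ, unitVecOfAngle φ⟫ = cos (θ - φ) := by
  simp [unitVecOfAngle, PiLp.inner_apply, Fin.sum_univ_two, cos_sub]
  ring

lemma half_pow_le_half_pow_div_two {m n : ℕ} (h : m < n) : (1 / 2 : ℝ) ^ n ≤ (1 / 2) ^ m / 2 :=
  calc (1 / 2 : ℝ) ^ n ≤ (1 / 2) ^ (m + 1) := pow_le_pow_of_le_one (by norm_num) (by norm_num) h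
    _ = (1 / 2) ^ m / 2 := by ring

lemma half_pow_div_two_le_abs_sub {m n : ℕ} (h : m ≠ n) :
    (1 / 2 : ℝ) ^ n / 2 ≤ |(1 / 2) ^ m - (1 / 2) ^ n| := by
  have hm : (0 : ℝ) < (1 / 2) ^ m := by positivity
  have hn : (0 : ℝ) < (1 / 2) ^ n := by positivity
  rcases h.lt_or_gt with hmn | hnm
  · have := half_pow_le_half_pow_div_two hmn
    rw [abs_of_pos (by linarith)]
    linarith
  · have := half_pow_le_half_pow_div_two hnm
    rw [abs_of_neg (by linarith)]
    linarith

/-- The directions `2⁻ⁿ` accumulate only at `0`, which is not one of them. -/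
lemma exists_unit_vectors_isolated :
    ∃ u : ℕ → EuclideanSpace ℝ (Fin 2), (∀ n, ‖u n‖ = 1) ∧
      ∀ n, ∃ c ∈ Set.Ico (0 : ℝ) 1, ∀ m ≠ n, |⟪u m, u n⟫| ≤ c := by
  refine ⟨fun n => unitVecOfAngle ((1 / 2) ^ n), fun n => norm_unitVecOfAngle _, fun n => ?_⟩
  have hθ0 : (0 : ℝ) < (1 / 2) ^ n / 2 := by positivity
  have hθ1 : (1 / 2 : ℝ) ^ n / 2 ≤ 1 / 2 := by
    have : (1 / 2 : ℝ) ^ n ≤ 1 := pow_le_one₀ (by norm_num) (by norm_num)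
    linarith
  have hπ := pi_gt_three
  refine ⟨cos ((1 / 2) ^ n / 2), ⟨cos_nonneg_of_neg_pi_div_two_le_of_le (by linarith) (by linarith),
    ?_⟩, fun m hmn => ?_⟩
  · simpa using cos_lt_cos_of_nonneg_of_le_pi le_rfl (by linarith) hθ0
  · have hm0 : (0 : ℝ) < (1 / 2) ^ m := by positivity
    have hm1 : (1 / 2 : ℝ) ^ m ≤ 1 := pow_le_one₀ (by norm_num) (by norm_num)
    have hn1 : (1 / 2 : ℝ) ^ n ≤ 1 := pow_le_one₀ (by norm_num) (by norm_num)
    have hdiff : |(1 / 2 : ℝ) ^ m - (1 / 2) ^ n| ≤ 1 := abs_sub_le_iff.2 ⟨by linarith, by linarith⟩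
    rw [inner_unitVecOfAngle, ← cos_abs, abs_of_nonneg (cos_nonneg_of_neg_pi_div_two_le_of_le
      (by linarith [abs_nonneg ((1 / 2 : ℝ) ^ m - (1 / 2) ^ n)]) (by linarith))]
    exact cos_le_cos_of_nonneg_of_le_pi hθ0.le (by linarith) (half_pow_div_two_le_abs_sub hmn)

lemma exists_rpow_mul_add_one_le {p c : ℝ} (hp : 0 < p) (hc : c ∈ Set.Ico (0 : ℝ) 1) :
    ∃ r : ℝ, 0 ≤ r ∧ (r * c) ^ p + 1 ≤ r ^ p := by
  have hcp : c ^ p < 1 := rpow_lt_one hc.1 hc.2 hp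
  have hq : 0 ≤ (1 - c ^ p)⁻¹ := inv_nonneg.2 (by linarith)
  have hq' : 1 - c ^ p ≠ 0 := by linarith
  refine ⟨(1 - c ^ p)⁻¹ ^ p⁻¹, rpow_nonneg hq _, le_of_eq ?_⟩
  rw [mul_rpow (rpow_nonneg hq _) hc.1, rpow_inv_rpow hq hp.ne']
  field_simp
  ring

end Directions

/-- Property (✓) of `X` relative to `j₀`. -/
def HasCheckExtension (p : ℝ) (X : PBanach p) (j₀ : EuclideanSpace ℝ (Fin 2) →ₗ[ℝ] X.carrier) :
    Prop :=
  ∀ (F : Type) [AddCommGroup F] [Module ℝ F], Module.finrank ℝ F = 3 →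
    ∀ (NF : PNorm p F) (i : EuclideanSpace ℝ (Fin 2) →ₗ[ℝ] F),
      (∀ h : EuclideanSpace ℝ (Fin 2), NF.N (i h) = ‖h‖) →
      ∃ j : F →ₗ[ℝ] X.carrier,
        (∀ w : F, X.pnorm.N (j w) = NF.N w) ∧
        ∀ h : EuclideanSpace ℝ (Fin 2), j (i h) = j₀ h

section Check

variable {p : ℝ} {X : PBanach p} {j₀ : EuclideanSpace ℝ (Fin 2) →ₗ[ℝ] X.carrier}

/-- The image of `(0, 1)` under the extension of `h ↦ (h, 0)` realises the profile of `NF`. -/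
lemma HasCheckExtension.exists_N_sub_eq (hcheck : HasCheckExtension p X j₀)
    (NF : PNorm p (EuclideanSpace ℝ (Fin 2) × ℝ)) (hNF : ∀ h, NF.N (h, 0) = ‖h‖) :
    ∃ x : X.carrier, ∀ h, X.pnorm.N (x - j₀ h) = NF.N (-h, 1) := by
  have hdim : Module.finrank ℝ (EuclideanSpace ℝ (Fin 2) × ℝ) = 3 := by
    rw [Module.finrank_prod, finrank_euclideanSpace_fin, Module.finrank_self]
  obtain ⟨j, hjN, hji⟩ := hcheck _ hdim NF (LinearMap.inl ℝ _ ℝ) hNF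
  refine ⟨j (0, 1), fun h => ?_⟩
  rw [← hji, ← map_sub, ← hjN]
  simp

theorem HasCheckExtension.exists_profile (hp0 : 0 < p) (hp1 : p ≤ 1)
    (hcheck : HasCheckExtension p X j₀) :
    ∃ (z : ℕ → X.carrier) (d : ℕ → ℝ) (x : Set ℕ → X.carrier),
      (∀ A, ∀ n ∉ A, X.pnorm.N (x A - z n) ^ p ≤ d n + 1) ∧
      (∀ A, ∀ n ∈ A, d n + 2 ≤ X.pnorm.N (x A - z n) ^ p) := by
  obtain ⟨u, hu, hiso⟩ := exists_unit_vectors_isolated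
  choose c hc hcu using hiso
  choose r hr hrc using fun n => exists_rpow_mul_add_one_le hp0 (hc n)
  have hu' : ∀ n, ‖u n‖ ≤ 1 := fun n => (hu n).le
  choose x hx using fun A => hcheck.exists_N_sub_eq (prodPNorm hp0 hp1 (supAbsInner u hu' A))
    (prodPNorm_inl hp0 hp1 _ (supAbsInner_le_norm hu'))
  have hnorm : ∀ n, ‖r n • u n‖ = r n := fun n => by
    rw [norm_smul, Real.norm_of_nonneg (hr n), hu n, mul_one]
  refine ⟨fun n => j₀ (r n • u n), fun n => r n ^ p, x, fun A n hn => ?_, fun A n hn => ?_⟩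
  · rw [hx, rpow_prodPNorm_neg_one, hnorm]
    refine max_le le_rfl ?_
    have := Real.rpow_le_rpow (apply_nonneg _ _)
      (supAbsInner_smul_le_of_notMem hu' (hc n).1 (hcu n) (hr n) hn) hp0.le
    linarith [hrc n]
  · rw [hx, rpow_prodPNorm_neg_one, hnorm, supAbsInner_smul_of_mem hu' (hu n) (hr n) hn]
    exact le_max_right _ _

end Check

section Separation

variable {p : ℝ} {X : Type} [AddCommGroup X] [Module ℝ X] (NX : PNorm p X)

lemma pairwise_one_le_of_profile {z : ℕ → X} {d : ℕ → ℝ} {x : Set ℕ → X}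
    (hout : ∀ A, ∀ n ∉ A, NX.N (x A - z n) ^ p ≤ d n + 1)
    (hin : ∀ A, ∀ n ∈ A, d n + 2 ≤ NX.N (x A - z n) ^ p) :
    Pairwise fun A B => 1 ≤ NX.N (x A - x B) ^ p := by
  have key : ∀ A B n, n ∈ A → n ∉ B → 1 ≤ NX.N (x A - x B) ^ p := fun A B n hA hB => by
    linarith [NX.rpow_N_sub_le (x A) (x B) (z n), hin A n hA, hout B n hB]
  intro A B hAB
  obtain ⟨n, hn⟩ := Set.symmDiff_nonempty.2 hAB
  rcases hn with ⟨hA, hB⟩ | ⟨hB, hA⟩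
  · exact key A B n hA hB
  · rw [NX.N_sub_comm]
    exact key B A n hB hA

lemma mk_le_mk_of_dense_of_pairwise_le {ι : Type} {x : ι → X} {δ : ℝ} (hδ : 0 < δ)
    (hx : Pairwise fun i j => δ ≤ NX.N (x i - x j) ^ p) (D : Set X)
    (hD : ∀ y : X, ∀ ε : ℝ, 0 < ε → ∃ d ∈ D, NX.N (y - d) ^ p < ε) :
    Cardinal.mk ι ≤ Cardinal.mk D := by
  choose y hyD hy using fun i => hD (x i) (δ / 2) (half_pos hδ)
  refine Cardinal.mk_le_of_injective (f := fun i => (⟨y i, hyD i⟩ : D)) fun i j hij => ?_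
  by_contra hne
  have hyij : y i = y j := congrArg Subtype.val hij
  have hyi : NX.N (x i - y j) ^ p < δ / 2 := hyij ▸ hy i
  have := NX.rpow_N_sub_le (x i) (y j) (x j)
  rw [NX.N_sub_comm (y j)] at this
  linarith [hx hne, hy j]

end Separation

theorem statement9_general (p : ℝ) (hp0 : 0 < p) (hp1 : p ≤ 1)
    (X : PBanach p)
    (j₀ : EuclideanSpace ℝ (Fin 2) →ₗ[ℝ] X.carrier)
    (hcheck : ∀ (F : Type) [AddCommGroup F] [Module ℝ F], Module.finrank ℝ F = 3 →
      ∀ (NF : PNorm p F) (i : EuclideanSpace ℝ (Fin 2) →ₗ[ℝ] F),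
        (∀ h : EuclideanSpace ℝ (Fin 2), NF.N (i h) = ‖h‖) →
        ∃ j : F →ₗ[ℝ] X.carrier,
          (∀ w : F, X.pnorm.N (j w) = NF.N w) ∧
          ∀ h : EuclideanSpace ℝ (Fin 2), j (i h) = j₀ h) :
    ∀ D : Set X.carrier,
      (∀ x : X.carrier, ∀ ε : ℝ, 0 < ε → ∃ y ∈ D, X.pnorm.N (x - y) ^ p < ε) →
      Cardinal.continuum ≤ Cardinal.mk D := by
  intro D hD
  obtain ⟨z, d, x, hout, hin⟩ := HasCheckExtension.exists_profile (X := X) hp0 hp1 hcheck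
  rw [← Cardinal.mk_set_nat]
  exact mk_le_mk_of_dense_of_pairwise_le X.pnorm one_pos
    (pairwise_one_le_of_profile X.pnorm hout hin) D hD

/-- Ben Yaacov–Henson, Haydon's proof: if a `p`-Banach space `X` contains the
2-dimensional Hilbert space isometrically and has the extension property (✓) for 3-dimensional
`p`-normed spaces, then every dense subset of `X` has cardinality at least the continuum. -/
theorem statement9 (p : ℝ) (hp0 : 0 < p) (hp1 : p ≤ 1)
    (X : PBanach p)
    (j₀ : EuclideanSpace ℝ (Fin 2) →ₗ[ℝ] X.carrier)
    (hj₀ : ∀ h : EuclideanSpace ℝ (Fin 2), X.pnorm.N (j₀ h) = ‖h‖)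
    (hcheck : ∀ (F : Type) [AddCommGroup F] [Module ℝ F], Module.finrank ℝ F = 3 →
      ∀ (NF : PNorm p F) (i : EuclideanSpace ℝ (Fin 2) →ₗ[ℝ] F),
        (∀ h : EuclideanSpace ℝ (Fin 2), NF.N (i h) = ‖h‖) →
        ∃ j : F →ₗ[ℝ] X.carrier,
          (∀ w : F, X.pnorm.N (j w) = NF.N w) ∧
          ∀ h : EuclideanSpace ℝ (Fin 2), j (i h) = j₀ h) :
    ∀ D : Set X.carrier,
      (∀ x : X.carrier, ∀ ε : ℝ, 0 < ε → ∃ y ∈ D, X.pnorm.N (x - y) ^ p < ε) →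
      Cardinal.continuum ≤ Cardinal.mk D :=
  statement9_general p hp0 hp1 X j₀ hcheck

end PGurarii
end
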